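/- arXiv:1911.12108 — 2 statements merged into one kernel-verified Lean document; each statement's English description precedes it below -/
import Mathlib

section
/- Every finite weak antichain A in ℤ^n is layer-decomposable: A = A_1 ∪ A_2 ∪ … ∪ A_n, where the sets A_i are defined inductively by A_1 = B_1(A) and A_i = B_i(A \ (A_1 ∪ … ∪ A_{i−1})). -/
namespace ProjWA

variable {ι : Type*}

/-- `A ⊆ ℤ^ι` is a weak antichain if it contains no `x, y` with `x i < y i` for every `i`. -/
def IsWeakAntichain [Fintype ι] (A : Finset (ι → ℤ)) : Prop :=
  ∀ x ∈ A, ∀ y ∈ A, ¬ ∀ i, x i < y i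

/-- The projection deleting the coordinate `i`. -/
def projFun [DecidableEq ι] (i : ι) (x : ι → ℤ) : {j : ι // j ≠ i} → ℤ :=
  fun j => x j.1

/-- The image of a finite set under the projection deleting coordinate `i`. -/
def proj [Fintype ι] [DecidableEq ι] (i : ι) (A : Finset (ι → ℤ)) :
    Finset ({j : ι // j ≠ i} → ℤ) :=
  A.image (projFun i)

/-- `gap A = Σ_i |π_i(A)| - |A|`. -/
def gap [Fintype ι] [DecidableEq ι] (A : Finset (ι → ℤ)) : ℤ :=
  (∑ i : ι, ((proj i A).card : ℤ)) - A.card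

/-- `X_n`: the set of points of `ℤ_{≥0}^ι` having at least one coordinate equal to zero. -/
def XSet (ι : Type*) : Set (ι → ℤ) :=
  {x | (∀ i, 0 ≤ x i) ∧ ∃ i, x i = 0}

/-- A down-set in `ℤ_{≥0}^ι`. -/
def IsDownSet (A : Finset (ι → ℤ)) : Prop :=
  ∀ x y : ι → ℤ, (∀ i, 0 ≤ x i) → (∀ i, x i ≤ y i) → y ∈ A → x ∈ A

/-- The `i`-th bottom layer `B_i(A)`. -/
def bottomLayer [Fintype ι] [DecidableEq ι] (i : ι) (A : Finset (ι → ℤ)) : Finset (ι → ℤ) :=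
  A.filter fun x => ∀ y ∈ A, (∀ j, j ≠ i → y j = x j) → x i ≤ y i

/-- The `i`-compression `C_i(A)`: each `x ∈ B_i(A)` is replaced by the point obtained
by setting its `i`-th coordinate to `0`. -/
def compress [Fintype ι] [DecidableEq ι] (i : ι) (A : Finset (ι → ℤ)) : Finset (ι → ℤ) :=
  (A \ bottomLayer i A) ∪ (bottomLayer i A).image fun x => Function.update x i 0

/-- `layersRest A k = A \ (A_1 ∪ ⋯ ∪ A_k)` where `A_i` are the layers of `A`. -/
def layersRest {n : ℕ} (A : Finset (Fin n → ℤ)) : ℕ → Finset (Fin n → ℤ)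
  | 0 => A
  | k + 1 =>
      layersRest A k \ (if h : k < n then bottomLayer ⟨k, h⟩ (layersRest A k) else ∅)

/-- The layers `A_1, …, A_n` of `A`, defined by `A_i = B_i(A \ (A_1 ∪ ⋯ ∪ A_{i-1}))`. -/
def layer {n : ℕ} (A : Finset (Fin n → ℤ)) (i : Fin n) : Finset (Fin n → ℤ) :=
  bottomLayer i (layersRest A i.1)

/-- `compressUpTo A k = C_k(C_{k-1}(⋯(C_1(A))⋯))`. -/
def compressUpTo {n : ℕ} (A : Finset (Fin n → ℤ)) : ℕ → Finset (Fin n → ℤ)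
  | 0 => A
  | k + 1 =>
      if h : k < n then compress ⟨k, h⟩ (compressUpTo A k) else compressUpTo A k

/-- The complete `i`-compression `𝒞_i(A)`: every line in direction `i` is replaced
by an initial segment of the same size. -/
def ccompress [Fintype ι] [DecidableEq ι] (i : ι) (A : Finset (ι → ℤ)) : Finset (ι → ℤ) :=
  A.biUnion fun x =>
    (Finset.range ((A.filter fun y => ∀ j, j ≠ i → y j = x j).card)).image fun a : ℕ =>
      Function.update x i (a : ℤ)

/-- The set `T = {i : x i ≠ y i}` of coordinates where `x` and `y` differ. -/
def diffSet [Fintype ι] (x y : ι → ℤ) : Finset ι :=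
  Finset.univ.filter fun i => x i ≠ y i

/-- The maximum value of `x` on a finite set of coordinates (`⊥` if the set is empty). -/
def maxOn (s : Finset ι) (x : ι → ℤ) : WithBot ℤ :=
  (s.image x).max

/-- The largest coordinate in `s` at which `x` attains its maximum over `s`. -/
def argmaxOn [LinearOrder ι] (s : Finset ι) (x : ι → ℤ) : WithBot ι :=
  (s.filter fun i => (x i : WithBot ℤ) = maxOn s x).max

/-- The balanced order: with `T = {i : x i ≠ y i}`, `x < y` iff the maximum of `x` on `T` is
smaller than that of `y` on `T`, or they are equal and the largest index where `x` attains
this maximum on `T` is smaller than the corresponding index for `y`. -/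
def balancedLT [Fintype ι] [LinearOrder ι] (x y : ι → ℤ) : Prop :=
  x ≠ y ∧
    (maxOn (diffSet x y) x < maxOn (diffSet x y) y ∨
      (maxOn (diffSet x y) x = maxOn (diffSet x y) y ∧
        argmaxOn (diffSet x y) x < argmaxOn (diffSet x y) y))

/-- `I` is an initial segment of the balanced order on `X_ι`. -/
def IsInitSeg [Fintype ι] [LinearOrder ι] (I : Finset (ι → ℤ)) : Prop :=
  ↑I ⊆ XSet ι ∧ ∀ x ∈ I, ∀ y ∈ XSet ι, balancedLT y x → y ∈ I

/-- `S(A) = {x ∈ ℤ_{>0}^ι : replacing any one coordinate of x by 0 gives an element of A}`. -/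
def SSet [DecidableEq ι] (A : Finset (ι → ℤ)) : Set (ι → ℤ) :=
  {x | (∀ k, 0 < x k) ∧ ∀ k, Function.update x k 0 ∈ A}

/-- Insert the value `a` at position `i`. -/
def insertAt [DecidableEq ι] (i : ι) (a : ℤ) (x : {j : ι // j ≠ i} → ℤ) : ι → ℤ :=
  fun j => if h : j = i then a else x ⟨j, h⟩

/-- `L^i_a(A)`: the elements of `X_{n-1}` which, after inserting the value `a` at
position `i`, give elements of `A`. -/
def Lset [Fintype ι] [DecidableEq ι] (i : ι) (a : ℤ) (A : Finset (ι → ℤ)) :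
    Finset ({j : ι // j ≠ i} → ℤ) :=
  (proj i (A.filter fun x => x i = a)).filter fun x' => ∃ j, x' j = 0

/-- `K^i(A)`: the elements of `ℤ_{>0}^{n-1}` which, after inserting a `0` at position `i`,
give elements of `A`. -/
def Kset [Fintype ι] [DecidableEq ι] (i : ι) (A : Finset (ι → ℤ)) :
    Finset ({j : ι // j ≠ i} → ℤ) :=
  (proj i (A.filter fun x => x i = 0)).filter fun x' => ∀ j, 0 < x' j

/-- `K` is an initial segment of `ℤ_{>0}^{n-1}` with respect to the order `≺` defined by
`x ≺ y` iff inserting a `0` at position `i` into `x` gives a smaller element of `X_n`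
(in the balanced order) than inserting a `0` at position `i` into `y`. -/
def IsKInitSeg [Fintype ι] [LinearOrder ι] (i : ι) (K : Finset ({j : ι // j ≠ i} → ℤ)) :
    Prop :=
  (∀ x ∈ K, ∀ j, 0 < x j) ∧
    ∀ x ∈ K, ∀ y : {j : ι // j ≠ i} → ℤ, (∀ j, 0 < y j) →
      balancedLT (insertAt i 0 y) (insertAt i 0 x) → y ∈ K

/-- `A_N = {x ∈ ℤ^n : 0 ≤ x_j ≤ N-1 for all j, and x_i = 0 for some i}`. -/
def ANbox (n N : ℕ) : Finset (Fin n → ℤ) :=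
  (Fintype.piFinset fun _ : Fin n => (Finset.range N).image fun k : ℕ => (k : ℤ)).filter
    fun x => ∃ i, x i = 0

/-- `g(n,m)`: the minimum of `gap A` over weak antichains `A` of size `m` in `ℤ^n`. -/
noncomputable def gMin (n m : ℕ) : ℝ :=
  sInf {r : ℝ | ∃ A : Finset (Fin n → ℤ), IsWeakAntichain A ∧ A.card = m ∧ (gap A : ℝ) = r}


/-!
If `x ∈ A` lies in no layer, it survives all `n` stages. Having survived stage `k`, it is not
in the bottom layer `B_k`, so some point of the same stage lies strictly below it on its line in
direction `k`. Chaining these descents over `k = 1, …, n` gives a point of `A` that is strictly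
below `x` in every coordinate, contradicting the weak antichain property.
-/

lemma exists_lt_of_notMem_bottomLayer [Fintype ι] [DecidableEq ι] {i : ι}
    {A : Finset (ι → ℤ)} {x : ι → ℤ} (hxA : x ∈ A) (hx : x ∉ bottomLayer i A) :
    ∃ y ∈ A, (∀ j, j ≠ i → y j = x j) ∧ y i < x i := by
  by_contra! h
  exact hx (Finset.mem_filter.2 ⟨hxA, h⟩)

lemma bottomLayer_subset [Fintype ι] [DecidableEq ι] {i : ι} {A : Finset (ι → ℤ)} :
    bottomLayer i A ⊆ A :=
  Finset.filter_subset _ _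

section Layers

variable {n : ℕ} (A : Finset (Fin n → ℤ))

lemma layersRest_succ {k : ℕ} (hk : k < n) :
    layersRest A (k + 1) = layersRest A k \ layer A ⟨k, hk⟩ := by
  simp only [layersRest, dif_pos hk, layer]

lemma layersRest_subset : ∀ k, layersRest A k ⊆ A
  | 0 => subset_rfl
  | k + 1 => Finset.sdiff_subset.trans (layersRest_subset k)

lemma layer_subset (i : Fin n) : layer A i ⊆ A :=
  bottomLayer_subset.trans (layersRest_subset A i)

variable {A}

lemma mem_layersRest_of_notMem_biUnion_layer {x : Fin n → ℤ} (hxA : x ∈ A)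
    (hx : x ∉ Finset.univ.biUnion (layer A)) : ∀ k, x ∈ layersRest A k
  | 0 => hxA
  | k + 1 => by
    have hk := mem_layersRest_of_notMem_biUnion_layer hxA hx k
    by_cases hkn : k < n
    · rw [layersRest_succ A hkn]
      exact Finset.mem_sdiff.2 ⟨hk, fun h => hx (Finset.mem_biUnion.2 ⟨_, Finset.mem_univ _, h⟩)⟩
    · simpa [layersRest, hkn] using hk

lemma exists_le_lt_of_mem_layersRest {x : Fin n → ℤ} :
    ∀ {k}, k ≤ n → x ∈ layersRest A k →
      ∃ y ∈ A, y ≤ x ∧ ∀ j : Fin n, (j : ℕ) < k → y j < x j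
  | 0, _, hx => ⟨x, layersRest_subset A 0 hx, le_rfl, fun _ hj => absurd hj (Nat.not_lt_zero _)⟩
  | k + 1, hk, hx => by
    rw [layersRest_succ A hk, Finset.mem_sdiff] at hx
    obtain ⟨x', hx'A, hx'eq, hx'lt⟩ := exists_lt_of_notMem_bottomLayer hx.1 hx.2
    have hx'x : x' ≤ x := fun j => by
      by_cases hj : j = ⟨k, hk⟩
      · exact hj ▸ hx'lt.le
      · exact (hx'eq j hj).le
    obtain ⟨y, hyA, hyx', hylt⟩ :=
      exists_le_lt_of_mem_layersRest (x := x') (k.le_succ.trans hk) hx'A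
    refine ⟨y, hyA, hyx'.trans hx'x, fun j hj => ?_⟩
    by_cases hjk : j = ⟨k, hk⟩
    · subst hjk
      exact (hyx' _).trans_lt hx'lt
    · have hjk' : (j : ℕ) < k := lt_of_le_of_ne (Nat.lt_succ_iff.1 hj) (Fin.val_ne_of_ne hjk)
      exact (hylt j hjk').trans_eq (hx'eq j hjk)

end Layers

/-- Every finite weak antichain `A ⊆ ℤ^n` is layer-decomposable:
`A = A_1 ∪ ⋯ ∪ A_n`. -/
theorem weakAntichain_layerDecomposable (n : ℕ) (A : Finset (Fin n → ℤ))
    (hA : IsWeakAntichain A) :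
    A = Finset.univ.biUnion (layer A) := by
  refine (Finset.biUnion_subset.2 fun i _ => layer_subset A i).antisymm' fun x hxA => ?_
  by_contra hx
  obtain ⟨y, hyA, -, hlt⟩ := exists_le_lt_of_mem_layersRest le_rfl
    (mem_layersRest_of_notMem_biUnion_layer hxA hx n)
  exact hA y hyA x hxA fun j => hlt j j.2

end ProjWA
end

section
/- Suppose n ≥ 3 and A ⊆ X_n is a finite down-set with 𝒞𝒞_i(A) = A for all i. If x < y in the balanced order, x ∉ A and y ∈ A, then: (i) x has exactly one coordinate equal to zero; (ii) if x_j = y_j for some j, then x_j = y_j = 0 and y has at least one other coordinate equal to zero. -/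
namespace ProjWA

variable {ι : Type*}

/-! The balanced order has a local description: `x < y` iff some coordinate `m` with
`x m ≠ y m` has `(y m, m)` lexicographically above every `(x j, j)` with `x j ≠ y j`. So the
order passes to slices through a coordinate where `x` and `y` agree, and compressedness puts `x`
into `A` as soon as `x` and `y` agree at some `i` and both have a zero off `i` (by `L^i`) or are
both positive off `i` (by `K^i`). Hence `x` and `y` agree only at zeros. If `x` had two zeros,
one of them would avoid the dominant coordinate `m` of `y`, and the same argument applied to
`y m • e_m ∈ A` (which has a further zero since `n ≥ 3`) gives a contradiction; if `y` had no
zero besides a shared one, the `K`-slice gives one. -/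

lemma mem_diffSet [Fintype ι] {x y : ι → ℤ} {j : ι} : j ∈ diffSet x y ↔ x j ≠ y j := by
  simp [diffSet]

lemma le_maxOn {s : Finset ι} (x : ι → ℤ) {j : ι} (hj : j ∈ s) :
    (x j : WithBot ℤ) ≤ maxOn s x :=
  Finset.le_max (Finset.mem_image_of_mem x hj)

lemma maxOn_le {s : Finset ι} {x : ι → ℤ} {M : WithBot ℤ}
    (h : ∀ j ∈ s, (x j : WithBot ℤ) ≤ M) : maxOn s x ≤ M :=
  Finset.max_le <| by simpa [Finset.mem_image] using h

lemma exists_argmaxOn_eq [LinearOrder ι] {s : Finset ι} (hs : s.Nonempty) (x : ι → ℤ) :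
    ∃ m ∈ s, argmaxOn s x = m ∧ maxOn s x = x m := by
  obtain ⟨M, hM⟩ := Finset.max_of_nonempty (hs.image x)
  obtain ⟨k, hk, rfl⟩ := Finset.mem_image.mp (Finset.mem_of_max hM)
  obtain ⟨m, hm⟩ := Finset.max_of_mem (s := s.filter fun i => (x i : WithBot ℤ) = maxOn s x)
    (Finset.mem_filter.mpr ⟨hk, hM.symm⟩)
  obtain ⟨hms, hmx⟩ := Finset.mem_filter.mp (Finset.mem_of_max hm)
  exact ⟨m, hms, hm, hmx.symm⟩

lemma le_argmaxOn [LinearOrder ι] {s : Finset ι} {x : ι → ℤ} {j : ι} (hj : j ∈ s)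
    (hx : (x j : WithBot ℤ) = maxOn s x) : (j : WithBot ι) ≤ argmaxOn s x :=
  Finset.le_max (Finset.mem_filter.mpr ⟨hj, hx⟩)

lemma argmaxOn_lt [LinearOrder ι] {s : Finset ι} {x : ι → ℤ} {m : ι}
    (h : ∀ j ∈ s, (x j : WithBot ℤ) = maxOn s x → j < m) : argmaxOn s x < m := by
  rw [argmaxOn, Finset.max_eq_sup_coe, Finset.sup_lt_iff (WithBot.bot_lt_coe m)]
  intro j hj
  exact WithBot.coe_lt_coe.mpr (h j (Finset.mem_filter.mp hj).1 (Finset.mem_filter.mp hj).2)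

section BalancedOrder

variable [Fintype ι] [LinearOrder ι]

theorem balancedLT_iff {x y : ι → ℤ} :
    balancedLT x y ↔ ∃ m ∈ diffSet x y,
      ∀ j ∈ diffSet x y, x j < y m ∨ (x j = y m ∧ j < m) := by
  constructor
  · rintro ⟨hne, hcmp⟩
    have hT : (diffSet x y).Nonempty := by
      obtain ⟨j, hj⟩ := Function.ne_iff.mp hne
      exact ⟨j, mem_diffSet.mpr hj⟩
    obtain ⟨m, hmT, hargy, hmaxy⟩ := exists_argmaxOn_eq hT y
    refine ⟨m, hmT, fun j hj => ?_⟩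
    have hxj := le_maxOn x hj
    rcases hcmp with hlt | ⟨heq, harg⟩
    · exact Or.inl (WithBot.coe_lt_coe.mp (hxj.trans_lt (hmaxy ▸ hlt)))
    · rw [heq, hmaxy, WithBot.coe_le_coe] at hxj
      refine hxj.lt_or_eq.imp_right fun hxm => ⟨hxm, ?_⟩
      have hjx := le_argmaxOn hj (by rw [heq, hmaxy, hxm])
      exact WithBot.coe_lt_coe.mp (hjx.trans_lt (hargy ▸ harg))
  · rintro ⟨m, hmT, hdom⟩
    refine ⟨fun h => mem_diffSet.mp hmT (congrFun h m), ?_⟩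
    have hxm : maxOn (diffSet x y) x ≤ y m := maxOn_le fun j hj => by
      rcases hdom j hj with h | h
      · exact WithBot.coe_le_coe.mpr h.le
      · exact WithBot.coe_le_coe.mpr h.1.le
    have hmy : (y m : WithBot ℤ) ≤ maxOn (diffSet x y) y := le_maxOn y hmT
    refine (hxm.trans hmy).lt_or_eq.imp_right fun heq => ⟨heq, ?_⟩
    have hmax : (y m : WithBot ℤ) = maxOn (diffSet x y) y := le_antisymm hmy (heq ▸ hxm)
    refine lt_of_lt_of_le (argmaxOn_lt fun j hj hjx => ?_) (le_argmaxOn hmT hmax)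
    rcases hdom j hj with h | h
    · rw [heq, ← hmax, WithBot.coe_inj] at hjx
      exact absurd hjx h.ne
    · exact h.2

lemma balancedLT_projFun [DecidableEq ι] {x y : ι → ℤ} {i : ι} (hi : x i = y i)
    (h : balancedLT x y) : balancedLT (projFun i x) (projFun i y) := by
  obtain ⟨m, hmT, hdom⟩ := balancedLT_iff.mp h
  have hmi : m ≠ i := by rintro rfl; exact mem_diffSet.mp hmT hi
  exact balancedLT_iff.mpr ⟨⟨m, hmi⟩,
    mem_diffSet.mpr (show x m ≠ y m from mem_diffSet.mp hmT),
    fun j hj => hdom j.1 (mem_diffSet.mpr (show projFun i x j ≠ projFun i y j from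
      mem_diffSet.mp hj))⟩

lemma exists_balancedLT_single [DecidableEq ι] {x y : ι → ℤ} (h : balancedLT x y)
    (hcom : ∀ j, x j = y j → x j = 0) : ∃ m, balancedLT x (Pi.single m (y m)) := by
  obtain ⟨m, hmT, hdom⟩ := balancedLT_iff.mp h
  refine ⟨m, balancedLT_iff.mpr ⟨m, mem_diffSet.mpr (by simpa using mem_diffSet.mp hmT),
    fun j hj => ?_⟩⟩
  rw [Pi.single_eq_same]
  refine hdom j (mem_diffSet.mpr fun hxy => mem_diffSet.mp hj ?_)
  rcases eq_or_ne j m with rfl | hjm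
  · simpa using hxy
  · simpa [hjm] using hcom j hxy

end BalancedOrder

lemma insertAt_zero_projFun [LinearOrder ι] {i : ι} {z : ι → ℤ} (hi : z i = 0) :
    insertAt i 0 (fun j : {j // j ≠ i} => z j.1) = z := by
  funext j
  by_cases hj : j = i
  · simp [insertAt, hj, hi]
  · simp [insertAt, hj]

section Slices

variable [DecidableEq ι]

lemma projFun_eq_projFun_iff {i : ι} {w z : ι → ℤ} (hi : w i = z i) :
    projFun i w = projFun i z ↔ w = z := by
  refine ⟨fun h => funext fun j => ?_, fun h => h ▸ rfl⟩
  by_cases hj : j = i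
  · exact hj ▸ hi
  · exact congrFun h ⟨j, hj⟩

variable [Fintype ι]

lemma projFun_mem_Lset_iff {i : ι} {A : Finset (ι → ℤ)} {z : ι → ℤ} :
    projFun i z ∈ Lset i (z i) A ↔ z ∈ A ∧ ∃ j ≠ i, z j = 0 := by
  simp only [Lset, proj, Finset.mem_filter, Finset.mem_image]
  refine and_congr ⟨?_, fun hz => ⟨z, ⟨hz, rfl⟩, rfl⟩⟩ ⟨?_, ?_⟩
  · rintro ⟨w, ⟨hw, hwi⟩, hwz⟩
    rwa [← (projFun_eq_projFun_iff hwi).mp hwz]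
  · rintro ⟨⟨j, hj⟩, hz⟩
    exact ⟨j, hj, hz⟩
  · rintro ⟨j, hj, hz⟩
    exact ⟨⟨j, hj⟩, hz⟩

lemma projFun_mem_Kset_iff {i : ι} {A : Finset (ι → ℤ)} {z : ι → ℤ} (hi : z i = 0) :
    projFun i z ∈ Kset i A ↔ z ∈ A ∧ ∀ j ≠ i, 0 < z j := by
  simp only [Kset, proj, Finset.mem_filter, Finset.mem_image]
  refine and_congr ⟨?_, fun hz => ⟨z, ⟨hz, hi⟩, rfl⟩⟩
    ⟨fun h j hj => h ⟨j, hj⟩, fun h j => h j.1 j.2⟩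
  rintro ⟨w, ⟨hw, hwi⟩, hwz⟩
  rwa [← (projFun_eq_projFun_iff (hwi.trans hi.symm)).mp hwz]

variable [LinearOrder ι] {A : Finset (ι → ℤ)} {x y : ι → ℤ}

lemma mem_of_balancedLT_of_isInitSeg_Lset {i : ι} (hL : IsInitSeg (Lset i (x i) A))
    (hxnn : ∀ j, 0 ≤ x j) (hyA : y ∈ A) (h : balancedLT x y) (hi : x i = y i)
    (hx : ∃ j ≠ i, x j = 0) (hy : ∃ j ≠ i, y j = 0) : x ∈ A := by
  have hyL : projFun i y ∈ Lset i (x i) A := hi ▸ projFun_mem_Lset_iff.mpr ⟨hyA, hy⟩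
  obtain ⟨j, hj, hxj⟩ := hx
  have hxX : projFun i x ∈ XSet {j : ι // j ≠ i} := ⟨fun j => hxnn j.1, ⟨j, hj⟩, hxj⟩
  exact (projFun_mem_Lset_iff.mp (hL.2 _ hyL _ hxX (balancedLT_projFun hi h))).1

lemma mem_of_balancedLT_of_isKInitSeg_Kset {i : ι} (hK : IsKInitSeg i (Kset i A))
    (hxi : x i = 0) (hyi : y i = 0) (hxpos : ∀ j ≠ i, 0 < x j) (hypos : ∀ j ≠ i, 0 < y j)
    (hyA : y ∈ A) (h : balancedLT x y) : x ∈ A := by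
  have hyK := (projFun_mem_Kset_iff hyi).mpr ⟨hyA, hypos⟩
  refine ((projFun_mem_Kset_iff hxi).mp (hK.2 _ hyK _ (fun j => hxpos j.1 j.2) ?_)).1
  unfold projFun
  rwa [insertAt_zero_projFun hxi, insertAt_zero_projFun hyi]

end Slices

section Compressed

variable [DecidableEq ι] [Fintype ι] [LinearOrder ι] {A : Finset (ι → ℤ)} {x y : ι → ℤ}

lemma eq_zero_of_eq_of_balancedLT (hAX : ↑A ⊆ XSet ι)
    (hL : ∀ i, ∀ a, 0 ≤ a → IsInitSeg (Lset i a A)) (hx : x ∈ XSet ι) (hyA : y ∈ A)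
    (h : balancedLT x y) (hxA : x ∉ A) {j : ι} (hj : x j = y j) : x j = 0 := by
  by_contra hj0
  obtain ⟨k, hk⟩ := hx.2
  obtain ⟨l, hl⟩ := (hAX hyA).2
  refine hxA (mem_of_balancedLT_of_isInitSeg_Lset (hL j (x j) (hx.1 j)) hx.1 hyA h hj
    ⟨k, ?_, hk⟩ ⟨l, ?_, hl⟩)
  · rintro rfl; exact hj0 hk
  · rintro rfl; exact hj0 (hj.trans hl)

lemma eq_of_eq_zero_of_balancedLT (hcard : 3 ≤ Fintype.card ι) (hAX : ↑A ⊆ XSet ι)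
    (hdown : IsDownSet A) (hL : ∀ i, ∀ a, 0 ≤ a → IsInitSeg (Lset i a A))
    (hx : x ∈ XSet ι) (hyA : y ∈ A) (h : balancedLT x y) (hxA : x ∉ A)
    {k l : ι} (hk : x k = 0) (hl : x l = 0) : k = l := by
  by_contra hkl
  obtain ⟨m, hxw⟩ :=
    exists_balancedLT_single h fun j => eq_zero_of_eq_of_balancedLT hAX hL hx hyA h hxA
  have hynn := (hAX hyA).1
  have hwA : Pi.single m (y m) ∈ A := hdown _ y
    (fun j => by by_cases hjm : j = m <;> simp [hjm, hynn])
    (fun j => by by_cases hjm : j = m <;> simp [hjm, hynn]) hyA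
  have two_zeros : ∀ i o, x i = 0 → x o = 0 → o ≠ i → i ≠ m → False := by
    intro i o hi ho hoi him
    have hpair : ({i, m} : Finset ι).card < Finset.univ.card :=
      Finset.card_le_two.trans_lt (by simpa [Nat.lt_iff_add_one_le] using hcard)
    obtain ⟨j, -, hj⟩ := Finset.exists_mem_notMem_of_card_lt_card hpair
    simp only [Finset.mem_insert, Finset.mem_singleton, not_or] at hj
    exact hxA (mem_of_balancedLT_of_isInitSeg_Lset (hL i (x i) (hx.1 i)) hx.1 hwA hxw
      (by simp [hi, him]) ⟨o, hoi, ho⟩ ⟨j, hj.1, by simp [hj.2]⟩)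
  by_cases hkm : k = m
  · exact two_zeros l k hl hk hkl (fun hlm => hkl (hkm.trans hlm.symm))
  · exact two_zeros k l hk hl (Ne.symm hkl) hkm

end Compressed

/-- Suppose `n ≥ 3` and `A ⊆ X_n` is a finite down-set fixed by all
balanced compressions (i.e. each `L^i_a(A)` is an initial segment of the balanced order and
each `K^i(A)` is `≺`-initial). If `x < y` in the balanced order with `x ∉ A` and `y ∈ A`,
then: (i) `x` has exactly one zero coordinate; (ii) if `x_j = y_j` for some `j` then
`x_j = y_j = 0` and `y` has at least one other zero coordinate. -/
theorem balanced_compressed_structure (n : ℕ) (hn : 3 ≤ n)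
    (A : Finset (Fin n → ℤ)) (hAX : ↑A ⊆ XSet (Fin n)) (hAdown : IsDownSet A)
    (hfixed : ∀ i : Fin n,
      (∀ a : ℤ, 0 ≤ a → IsInitSeg (Lset i a A)) ∧ IsKInitSeg i (Kset i A))
    (x y : Fin n → ℤ) (hx : x ∈ XSet (Fin n)) (hy : y ∈ A)
    (hxy : balancedLT x y) (hxA : x ∉ A) :
    (∃! j : Fin n, x j = 0) ∧
      ∀ j : Fin n, x j = y j → x j = 0 ∧ y j = 0 ∧ ∃ k : Fin n, k ≠ j ∧ y k = 0 := by
  have hL i := (hfixed i).1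
  have hzero_unique {k l} : x k = 0 → x l = 0 → k = l :=
    eq_of_eq_zero_of_balancedLT (by simpa using hn) hAX hAdown hL hx hy hxy hxA
  refine ⟨?_, fun j hj => ?_⟩
  · obtain ⟨k, hk⟩ := hx.2
    exact ⟨k, hk, fun j hj => hzero_unique hj hk⟩
  have hxj : x j = 0 := eq_zero_of_eq_of_balancedLT hAX hL hx hy hxy hxA hj
  refine ⟨hxj, hj ▸ hxj, ?_⟩
  by_contra! hyj
  refine hxA (mem_of_balancedLT_of_isKInitSeg_Kset (hfixed j).2 hxj (hj ▸ hxj) ?_ ?_ hy hxy)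
  · exact fun k hk => (hx.1 k).lt_of_ne fun hk0 => hk (hzero_unique hk0.symm hxj)
  · exact fun k hk => ((hAX hy).1 k).lt_of_ne fun hk0 => hyj k hk hk0.symm

end ProjWA
end
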